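/- arXiv:1310.1901 — 6 statements merged into one kernel-verified Lean document; each statement's English description precedes it below -/
import Mathlib

section
/- Define for driftless sticky Brownian motion with stickiness c > 0 at 0 and reward g(x) = (1+x)⁺ the function t(x) = g(x)ψ_α'(x) − g'(x)ψ_α(x) on (−1, ∞) \ {0}. Then t(x) = e^{√(2α)x}((1+x)√(2α) − 1) for −1 < x < 0 and t(x) = e^{√(2α)x}((1+x)√(2α) − 1) + c√(2α)((1+x)√(2α)·cosh(√(2α)x) − sinh(√(2α)x)) for x > 0, and t is strictly increasing on each of the intervals (−1, 0) and (0, ∞). -/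
open Real Set

/-- For sticky Brownian motion with reward `g(x) = (1+x)⁺`, the
function `t(x) = g(x)ψ_α'(x) − g'(x)ψ_α(x)` on `(−1,∞)\{0}` has the stated
explicit forms and is strictly increasing on `(−1,0)` and on `(0,∞)`. -/
theorem stmt6 (α c : ℝ) (hα : 0 < α) (hc : 0 < c)
    (γ : ℝ) (hγ : γ = c * α / Real.sqrt (2 * α))
    (ψ : ℝ → ℝ)
    (hψneg : ∀ x ≤ (0:ℝ), ψ x = Real.exp (Real.sqrt (2 * α) * x))
    (hψpos : ∀ x ≥ (0:ℝ), ψ x = (1 + γ) * Real.exp (Real.sqrt (2 * α) * x)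
        - γ * Real.exp (-(Real.sqrt (2 * α)) * x))
    (t : ℝ → ℝ)
    (ht : ∀ x : ℝ, -1 < x → x ≠ 0 → t x = (1 + x) * deriv ψ x - ψ x) :
    (∀ x : ℝ, -1 < x → x < 0 →
        t x = Real.exp (Real.sqrt (2 * α) * x) * ((1 + x) * Real.sqrt (2 * α) - 1)) ∧
    (∀ x : ℝ, 0 < x →
        t x = Real.exp (Real.sqrt (2 * α) * x) * ((1 + x) * Real.sqrt (2 * α) - 1)
          + c * Real.sqrt (2 * α) *
            ((1 + x) * Real.sqrt (2 * α) * Real.cosh (Real.sqrt (2 * α) * x)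
              - Real.sinh (Real.sqrt (2 * α) * x))) ∧
    StrictMonoOn t (Set.Ioo (-1 : ℝ) 0) ∧
    StrictMonoOn t (Set.Ioi (0 : ℝ)) := by
  set s := Real.sqrt (2 * α) with hsdef
  have hs : 0 < s := Real.sqrt_pos.2 (by linarith)
  have hs2 : s ^ 2 = 2 * α := Real.sq_sqrt (by linarith)
  have hγ' : γ = c * s / 2 := by
    rw [hγ]
    rw [div_eq_div_iff hs.ne' (by norm_num)]
    nlinarith [hs2]
  -- basic derivative facts
  have hmul : ∀ x : ℝ, HasDerivAt (fun y => s * y) s x := by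
    intro x
    simpa using (hasDerivAt_id x).const_mul s
  have hexp : ∀ x : ℝ, HasDerivAt (fun y => Real.exp (s * y)) (s * Real.exp (s * x)) x := by
    intro x
    simpa [Function.comp_def, mul_comm] using (Real.hasDerivAt_exp (s * x)).comp x (hmul x)
  have hmuln : ∀ x : ℝ, HasDerivAt (fun y => -s * y) (-s) x := by
    intro x
    simpa using (hasDerivAt_id x).const_mul (-s)
  have hexpn : ∀ x : ℝ,
      HasDerivAt (fun y => Real.exp (-s * y)) (-s * Real.exp (-s * x)) x := by
    intro x
    simpa [Function.comp_def, mul_comm] using (Real.hasDerivAt_exp (-s * x)).comp x (hmuln x)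
  have hcosh : ∀ x : ℝ,
      HasDerivAt (fun y => Real.cosh (s * y)) (s * Real.sinh (s * x)) x := by
    intro x
    simpa [Function.comp_def, mul_comm] using (Real.hasDerivAt_cosh (s * x)).comp x (hmul x)
  have hsinh : ∀ x : ℝ,
      HasDerivAt (fun y => Real.sinh (s * y)) (s * Real.cosh (s * x)) x := by
    intro x
    simpa [Function.comp_def, mul_comm] using (Real.hasDerivAt_sinh (s * x)).comp x (hmul x)
  -- deriv ψ on the negative side
  have hderivneg : ∀ x : ℝ, x < 0 → deriv ψ x = s * Real.exp (s * x) := by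
    intro x hx
    have hev : ψ =ᶠ[nhds x] fun y => Real.exp (s * y) := by
      filter_upwards [Iio_mem_nhds hx] with y hy
      exact hψneg y (le_of_lt hy)
    rw [hev.deriv_eq]
    exact (hexp x).deriv
  -- deriv ψ on the positive side
  have hderivpos : ∀ x : ℝ, 0 < x →
      deriv ψ x = (1 + γ) * (s * Real.exp (s * x)) - γ * (-s * Real.exp (-s * x)) := by
    intro x hx
    have hev : ψ =ᶠ[nhds x]
        fun y => (1 + γ) * Real.exp (s * y) - γ * Real.exp (-s * y) := by
      filter_upwards [Ioi_mem_nhds hx] with y hy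
      simpa [neg_mul] using hψpos y (le_of_lt hy)
    rw [hev.deriv_eq]
    exact (((hexp x).const_mul (1 + γ)).sub ((hexpn x).const_mul γ)).deriv
  -- Explicit formula on (-1, 0)
  have part1 : ∀ x : ℝ, -1 < x → x < 0 →
      t x = Real.exp (s * x) * ((1 + x) * s - 1) := by
    intro x hx1 hx0
    rw [ht x hx1 (ne_of_lt hx0), hderivneg x hx0, hψneg x hx0.le]
    ring
  -- Explicit formula on (0, ∞)
  have part2 : ∀ x : ℝ, 0 < x →
      t x = Real.exp (s * x) * ((1 + x) * s - 1)
        + c * s * ((1 + x) * s * Real.cosh (s * x) - Real.sinh (s * x)) := by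
    intro x hx
    rw [ht x (by linarith) (ne_of_gt hx), hderivpos x hx, hψpos x hx.le,
      Real.cosh_eq, Real.sinh_eq, hγ']
    simp only [neg_mul]
    ring
  refine ⟨part1, part2, ?_, ?_⟩
  · -- strict monotonicity on (-1, 0)
    have key : StrictMonoOn (fun x => Real.exp (s * x) * ((1 + x) * s - 1))
        (Set.Ioo (-1 : ℝ) 0) := by
      apply strictMonoOn_of_deriv_pos (convex_Ioo _ _)
      · exact Continuous.continuousOn (by fun_prop)
      · intro x hx
        rw [interior_Ioo] at hx
        have hlin : HasDerivAt (fun y : ℝ => (1 + y) * s - 1) s x := by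
          simpa using (((hasDerivAt_id x).const_add 1).mul_const s).sub_const 1
        have hd : HasDerivAt (fun x => Real.exp (s * x) * ((1 + x) * s - 1))
            (s * Real.exp (s * x) * ((1 + x) * s - 1) + Real.exp (s * x) * s) x :=
          (hexp x).mul hlin
        rw [hd.deriv]
        nlinarith [mul_pos (mul_pos (mul_pos hs (Real.exp_pos (s * x)))
          (show (0:ℝ) < 1 + x by linarith [hx.1])) hs]
    intro a ha b hb hab
    rw [part1 a ha.1 ha.2, part1 b hb.1 hb.2]
    exact key ha hb hab
  · -- strict monotonicity on (0, ∞)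
    have key : StrictMonoOn (fun x => Real.exp (s * x) * ((1 + x) * s - 1)
        + c * s * ((1 + x) * s * Real.cosh (s * x) - Real.sinh (s * x)))
        (Set.Ioi (0 : ℝ)) := by
      apply strictMonoOn_of_deriv_pos (convex_Ioi _)
      · exact Continuous.continuousOn (by fun_prop)
      · intro x hx
        rw [interior_Ioi] at hx
        simp only [Set.mem_Ioi] at hx
        have hlin : HasDerivAt (fun y : ℝ => (1 + y) * s - 1) s x := by
          simpa using (((hasDerivAt_id x).const_add 1).mul_const s).sub_const 1
        have hlin2 : HasDerivAt (fun y : ℝ => (1 + y) * s) s x := by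
          simpa using ((hasDerivAt_id x).const_add 1).mul_const s
        have hd : HasDerivAt (fun x => Real.exp (s * x) * ((1 + x) * s - 1)
            + c * s * ((1 + x) * s * Real.cosh (s * x) - Real.sinh (s * x)))
            ((s * Real.exp (s * x) * ((1 + x) * s - 1) + Real.exp (s * x) * s)
              + c * s * ((s * Real.cosh (s * x)
                + (1 + x) * s * (s * Real.sinh (s * x))) - s * Real.cosh (s * x))) x :=
          ((hexp x).mul hlin).add
            (((hlin2.mul (hcosh x)).sub (hsinh x)).const_mul (c * s))
        rw [hd.deriv]
        have hsinhpos : 0 < Real.sinh (s * x) := by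
          rw [Real.sinh_eq]
          have h1 : -(s * x) < s * x := by nlinarith [mul_pos hs hx]
          have := Real.exp_lt_exp.2 h1
          linarith
        have h1x : (0:ℝ) < 1 + x := by linarith
        nlinarith [mul_pos (mul_pos (mul_pos hs (Real.exp_pos (s * x))) h1x) hs,
          mul_pos (mul_pos (mul_pos (mul_pos (mul_pos hc hs) h1x) hs) hs) hsinhpos]
    intro a ha b hb hab
    simp only [Set.mem_Ioi] at ha hb
    rw [part2 a ha, part2 b hb]
    exact key ha hb hab
end

section
/- (Smooth fit principle, analytic core.) Let F be continuous and strictly increasing near z, let g, V : I → ℝ with V ≥ g everywhere, V(z) = g(z), and V(x) = g(x) for x ∈ [z, z+ε₁). Assume g is F-differentiable at z (the two one-sided F-derivatives exist and agree) and that V has one-sided F-derivatives at z satisfying d⁻V/dF(z) − d⁺V/dF(z) ≥ 0. Then V is F-differentiable at z and d⁺V/dF(z) = d⁻V/dF(z) = dg/dF(z). -/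
open Set Filter

/-- smooth fit, analytic core: let `F` be continuous and strictly
increasing, `V ≥ g`, `V = g` on `[z, z+ε₁)`. If `g` is `F`-differentiable at `z`
with `F`-derivative `L`, and `V` has one-sided `F`-derivatives `Dp` (right) and
`Dm` (left) at `z` with `Dp ≤ Dm`, then `Dp = Dm = L`. -/
theorem stmt11 (F g V : ℝ → ℝ) (z ε₁ : ℝ) (hε₁ : 0 < ε₁)
    (hFcont : Continuous F) (hFmono : StrictMono F)
    (hmaj : ∀ x, g x ≤ V x)
    (heq : ∀ x ∈ Set.Ico z (z + ε₁), V x = g x)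
    (L Dp Dm : ℝ)
    (hgR : Tendsto (fun δ : ℝ => (g (z + δ) - g z) / (F (z + δ) - F z))
        (nhdsWithin 0 (Set.Ioi 0)) (nhds L))
    (hgL : Tendsto (fun δ : ℝ => (g (z - δ) - g z) / (F (z - δ) - F z))
        (nhdsWithin 0 (Set.Ioi 0)) (nhds L))
    (hVR : Tendsto (fun δ : ℝ => (V (z + δ) - V z) / (F (z + δ) - F z))
        (nhdsWithin 0 (Set.Ioi 0)) (nhds Dp))
    (hVL : Tendsto (fun δ : ℝ => (V (z - δ) - V z) / (F (z - δ) - F z))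
        (nhdsWithin 0 (Set.Ioi 0)) (nhds Dm))
    (hjump : Dp ≤ Dm) :
    Dp = L ∧ Dm = L := by
  have hVz : V z = g z := heq z ⟨le_refl z, by linarith⟩
  -- Right quotients eventually coincide
  have hDpL : Dp = L := by
    have hev : (fun δ : ℝ => (V (z + δ) - V z) / (F (z + δ) - F z)) =ᶠ[nhdsWithin 0 (Set.Ioi 0)]
        (fun δ : ℝ => (g (z + δ) - g z) / (F (z + δ) - F z)) := by
      filter_upwards [Ioo_mem_nhdsGT_of_mem (by constructor <;> [rfl; exact hε₁])] with δ hδ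
      have : V (z + δ) = g (z + δ) := heq _ ⟨by linarith [hδ.1], by linarith [hδ.2]⟩
      rw [this, hVz]
    exact tendsto_nhds_unique (hVR.congr' hev) hgR
  refine ⟨hDpL, le_antisymm ?_ (hDpL ▸ hjump)⟩
  -- Left: quotient of V ≤ quotient of g since denominator negative
  have hle : Dm ≤ L := by
    refine le_of_tendsto_of_tendsto hVL hgL ?_
    filter_upwards [self_mem_nhdsWithin] with δ (hδ : 0 < δ)
    have hden : F (z - δ) - F z < 0 := sub_neg.mpr (hFmono (by linarith))
    have hnum : g (z - δ) - g z ≤ V (z - δ) - V z := by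
      rw [hVz]; linarith [hmaj (z - δ)]
    exact div_le_div_of_nonpos_of_le (le_of_lt hden) hnum
  exact hle
end

section
/- Let σ be a nonnegative Radon measure on an open interval (l,r), let ψ, φ : (l,r) → (0,∞) be continuous with ψ increasing and φ decreasing, and define u(x) = w⁻¹ φ(x) ∫_{(l,x]} ψ dσ + w⁻¹ ψ(x) ∫_{(x,r)} φ dσ for a constant w > 0, assuming both integrals are finite for each x. Then u is continuous on (l,r). -/
open MeasureTheory Set

/-- continuity of excessive functions via the Riesz
representation: with `σ` a nonnegative Radon measure on `(l,r)`, `ψ, φ`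
positive continuous with `ψ` increasing and `φ` decreasing, and
`u(x) = w⁻¹φ(x)∫_{(l,x]}ψ dσ + w⁻¹ψ(x)∫_{(x,r)}φ dσ` (integrals finite),
`u` is continuous on `(l,r)`. -/
theorem stmt12 (l r : ℝ) (hlr : l < r)
    (σ : Measure ℝ) [IsLocallyFiniteMeasure σ]
    (hσ : σ (Set.Ioo l r)ᶜ = 0)
    (ψ φ : ℝ → ℝ) (w : ℝ) (hw : 0 < w)
    (hψc : ContinuousOn ψ (Set.Ioo l r)) (hφc : ContinuousOn φ (Set.Ioo l r))
    (hψpos : ∀ x ∈ Set.Ioo l r, 0 < ψ x) (hφpos : ∀ x ∈ Set.Ioo l r, 0 < φ x)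
    (hψmono : MonotoneOn ψ (Set.Ioo l r)) (hφanti : AntitoneOn φ (Set.Ioo l r))
    (hψint : ∀ x ∈ Set.Ioo l r, IntegrableOn ψ (Set.Ioc l x) σ)
    (hφint : ∀ x ∈ Set.Ioo l r, IntegrableOn φ (Set.Ioo x r) σ)
    (u : ℝ → ℝ)
    (hu : ∀ x ∈ Set.Ioo l r,
        u x = w⁻¹ * φ x * (∫ y in Set.Ioc l x, ψ y ∂σ)
            + w⁻¹ * ψ x * (∫ y in Set.Ioo x r, φ y ∂σ)) :
    ContinuousOn u (Set.Ioo l r) := by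
  set μ := σ.restrict (Set.Ioo l r) with hμ
  set k : ℝ → ℝ → ℝ := fun x y => ψ (min x y) * φ (max x y) with hk
  set v : ℝ → ℝ := fun x => w⁻¹ * ∫ y, k x y ∂μ with hv
  have key : ∀ x ∈ Set.Ioo l r, u x = v x := by
    intro x hx
    have hsub : Set.Ioo l r = Set.Ioc l x ∪ Set.Ioo x r :=
      (Set.Ioc_union_Ioo_eq_Ioo hx.1.le hx.2).symm
    have hdisj : Disjoint (Set.Ioc l x) (Set.Ioo x r) := by
      apply Set.disjoint_left.2
      rintro y ⟨_, h1⟩ ⟨h2, _⟩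
      exact absurd h1 (not_le.2 h2)
    have heq1 : Set.EqOn (fun y => ψ y * φ x) (k x) (Set.Ioc l x) := by
      intro y hy
      simp only [k, min_eq_right hy.2, max_eq_left hy.2]
    have heq2 : Set.EqOn (fun y => ψ x * φ y) (k x) (Set.Ioo x r) := by
      intro y hy
      simp only [k, min_eq_left hy.1.le, max_eq_right hy.1.le]
    have hi1 : IntegrableOn (k x) (Set.Ioc l x) σ :=
      MeasureTheory.IntegrableOn.congr_fun ((hψint x hx).mul_const (φ x)) heq1 measurableSet_Ioc
    have hi2 : IntegrableOn (k x) (Set.Ioo x r) σ :=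
      MeasureTheory.IntegrableOn.congr_fun ((hφint x hx).const_mul (ψ x)) heq2 measurableSet_Ioo
    have hsplit : (∫ y, k x y ∂μ)
        = (∫ y in Set.Ioc l x, ψ y * φ x ∂σ) + ∫ y in Set.Ioo x r, ψ x * φ y ∂σ := by
      rw [hμ, hsub, setIntegral_union hdisj measurableSet_Ioo hi1 hi2,
        setIntegral_congr_fun measurableSet_Ioc heq1.symm,
        setIntegral_congr_fun measurableSet_Ioo heq2.symm]
    rw [hu x hx, hv]
    simp only [hsplit, integral_mul_const, integral_const_mul]
    ring
  intro x₀ hx₀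
  obtain ⟨hlx₀, hx₀r⟩ := hx₀
  obtain ⟨a, hla, hax⟩ : ∃ a, l < a ∧ a < x₀ := ⟨(l + x₀) / 2, by linarith, by linarith⟩
  obtain ⟨b, hxb, hbr⟩ : ∃ b, x₀ < b ∧ b < r := ⟨(x₀ + r) / 2, by linarith, by linarith⟩
  have ha' : a ∈ Set.Ioo l r := ⟨hla, by linarith⟩
  have hb' : b ∈ Set.Ioo l r := ⟨by linarith, hbr⟩
  have hx₀' : x₀ ∈ Set.Ioo l r := ⟨hlx₀, hx₀r⟩
  -- dominating bound
  set bound : ℝ → ℝ := fun y =>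
    (Set.Ioc l b).indicator (fun y => φ a * ψ y) y
      + (Set.Ioo a r).indicator (fun y => ψ b * φ y) y with hbdef
  have hbound_int : Integrable bound μ := by
    have h1 : Integrable ((Set.Ioc l b).indicator (fun y => φ a * ψ y)) σ :=
      (integrable_indicator_iff measurableSet_Ioc).2 ((hψint b hb').const_mul (φ a))
    have h2 : Integrable ((Set.Ioo a r).indicator (fun y => ψ b * φ y)) σ :=
      (integrable_indicator_iff measurableSet_Ioo).2 ((hφint a ha').const_mul (ψ b))
    exact (h1.add h2).restrict
  have hmem_ae : ∀ᵐ y ∂μ, y ∈ Set.Ioo l r := ae_restrict_mem measurableSet_Ioo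
  have hminmem : ∀ x ∈ Set.Ioo l r, ∀ y ∈ Set.Ioo l r, min x y ∈ Set.Ioo l r := by
    intro x hx y hy
    exact ⟨lt_min hx.1 hy.1, (min_le_left x y).trans_lt hx.2⟩
  have hmaxmem : ∀ x ∈ Set.Ioo l r, ∀ y ∈ Set.Ioo l r, max x y ∈ Set.Ioo l r := by
    intro x hx y hy
    exact ⟨hx.1.trans_le (le_max_left x y), max_lt hx.2 hy.2⟩
  have hIcont : ContinuousAt (fun x => ∫ y, k x y ∂μ) x₀ := by
    apply MeasureTheory.continuousAt_of_dominated
      (bound := bound)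
    · filter_upwards [isOpen_Ioo.mem_nhds hx₀'] with x hx
      have c1 : ContinuousOn (fun y => ψ (min x y)) (Set.Ioo l r) :=
        hψc.comp ((continuous_const.min continuous_id).continuousOn)
          (fun y hy => hminmem x hx y hy)
      have c2 : ContinuousOn (fun y => φ (max x y)) (Set.Ioo l r) :=
        hφc.comp ((continuous_const.max continuous_id).continuousOn)
          (fun y hy => hmaxmem x hx y hy)
      exact (c1.mul c2).aestronglyMeasurable measurableSet_Ioo
    · filter_upwards [isOpen_Ioo.mem_nhds (show x₀ ∈ Set.Ioo a b from ⟨hax, hxb⟩)] with x hx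
      have hx' : x ∈ Set.Ioo l r := ⟨hla.trans hx.1, hx.2.trans hbr⟩
      filter_upwards [hmem_ae] with y hy
      have hkpos : 0 < k x y :=
        mul_pos (hψpos _ (hminmem x hx' y hy)) (hφpos _ (hmaxmem x hx' y hy))
      rw [Real.norm_eq_abs, abs_of_pos hkpos]
      rcases le_or_gt y x with hyx | hxy
      · have h1 : k x y = ψ y * φ x := by
          simp only [k, min_eq_right hyx, max_eq_left hyx]
        have hy1 : y ∈ Set.Ioc l b := ⟨hy.1, hyx.trans (hx.2.le)⟩
        have hle : ψ y * φ x ≤ φ a * ψ y := by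
          have : φ x ≤ φ a := hφanti ha' hx' (hx.1.le)
          have hψy : 0 ≤ ψ y := (hψpos y hy).le
          nlinarith
        have hnn : 0 ≤ (Set.Ioo a r).indicator (fun y => ψ b * φ y) y := by
          apply Set.indicator_nonneg
          intro z hz
          exact (mul_pos (hψpos b hb') (hφpos z ⟨hla.trans hz.1, hz.2⟩)).le
        rw [h1]
        calc ψ y * φ x ≤ φ a * ψ y := hle
          _ ≤ bound y := by
              rw [hbdef]
              simp only [Set.indicator_of_mem hy1]
              linarith
      · have h1 : k x y = ψ x * φ y := by
          simp only [k, min_eq_left hxy.le, max_eq_right hxy.le]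
        have hy2 : y ∈ Set.Ioo a r := ⟨hx.1.trans hxy, hy.2⟩
        have hle : ψ x * φ y ≤ ψ b * φ y := by
          have : ψ x ≤ ψ b := hψmono hx' hb' (hx.2.le)
          have hφy : 0 ≤ φ y := (hφpos y hy).le
          nlinarith
        have hnn : 0 ≤ (Set.Ioc l b).indicator (fun y => φ a * ψ y) y := by
          apply Set.indicator_nonneg
          intro z hz
          exact (mul_pos (hφpos a ha') (hψpos z ⟨hz.1, hz.2.trans_lt hbr⟩)).le
        rw [h1]
        calc ψ x * φ y ≤ ψ b * φ y := hle
          _ ≤ bound y := by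
              rw [hbdef]
              simp only [Set.indicator_of_mem hy2]
              linarith
    · exact hbound_int
    · filter_upwards [hmem_ae] with y hy
      have c1 : ContinuousAt (fun x => ψ (min x y)) x₀ := by
        have c0 : ContinuousAt (fun x => min x y) x₀ :=
          (continuous_id.min continuous_const).continuousAt
        exact ContinuousAt.comp (g := ψ) (f := fun x => min x y) (x := x₀)
          (hψc.continuousAt (isOpen_Ioo.mem_nhds (hminmem x₀ hx₀' y hy))) c0
      have c2 : ContinuousAt (fun x => φ (max x y)) x₀ := by
        have c0 : ContinuousAt (fun x => max x y) x₀ :=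
          (continuous_id.max continuous_const).continuousAt
        exact ContinuousAt.comp (g := φ) (f := fun x => max x y) (x := x₀)
          (hφc.continuousAt (isOpen_Ioo.mem_nhds (hmaxmem x₀ hx₀' y hy))) c0
      exact c1.mul c2
  have hva : ContinuousAt v x₀ := continuousAt_const.mul hIcont
  exact hva.continuousWithinAt.congr key (key x₀ hx₀')
end

section
/- Let σ be a nonnegative Radon measure on (l,r), ψ, φ positive continuous with ψ increasing, φ decreasing, both differentiable at z ∈ (l,r) with respect to a continuous increasing function F, and let u(x) = w⁻¹φ(x)∫_{(l,x]}ψdσ + w⁻¹ψ(x)∫_{(x,r)}φdσ (all integrals finite, w > 0). Then the right F-derivative of u at z exists and equals d⁺u/dF(z) = w⁻¹( (dφ/dF)(z)∫_{(l,z]}ψdσ + (dψ/dF)(z)∫_{(z,r)}φdσ ). -/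
open MeasureTheory Set Filter

/-- under the Riesz-representation setup, if `ψ` and `φ` are
`F`-differentiable at `z` (with `F` continuous, strictly increasing), then the
right `F`-derivative of
`u(x) = w⁻¹φ(x)∫_{(l,x]}ψ dσ + w⁻¹ψ(x)∫_{(x,r)}φ dσ` exists at `z` and equals
`w⁻¹((dφ/dF)(z)∫_{(l,z]}ψ dσ + (dψ/dF)(z)∫_{(z,r)}φ dσ)`. -/
theorem stmt13 (l r : ℝ) (z : ℝ) (hz : z ∈ Set.Ioo l r)
    (σ : Measure ℝ) [IsLocallyFiniteMeasure σ]
    (hσ : σ (Set.Ioo l r)ᶜ = 0)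
    (ψ φ F : ℝ → ℝ) (w : ℝ) (hw : 0 < w)
    (hFc : ContinuousOn F (Set.Ioo l r)) (hFmono : StrictMonoOn F (Set.Ioo l r))
    (hψc : ContinuousOn ψ (Set.Ioo l r)) (hφc : ContinuousOn φ (Set.Ioo l r))
    (hψpos : ∀ x ∈ Set.Ioo l r, 0 < ψ x) (hφpos : ∀ x ∈ Set.Ioo l r, 0 < φ x)
    (hψmono : MonotoneOn ψ (Set.Ioo l r)) (hφanti : AntitoneOn φ (Set.Ioo l r))
    (hψint : ∀ x ∈ Set.Ioo l r, IntegrableOn ψ (Set.Ioc l x) σ)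
    (hφint : ∀ x ∈ Set.Ioo l r, IntegrableOn φ (Set.Ioo x r) σ)
    (dψ dφ : ℝ)
    (hψF : Tendsto (fun δ : ℝ => (ψ (z + δ) - ψ z) / (F (z + δ) - F z))
        (nhdsWithin 0 ({0}ᶜ)) (nhds dψ))
    (hφF : Tendsto (fun δ : ℝ => (φ (z + δ) - φ z) / (F (z + δ) - F z))
        (nhdsWithin 0 ({0}ᶜ)) (nhds dφ))
    (u : ℝ → ℝ)
    (hu : ∀ x ∈ Set.Ioo l r,
        u x = w⁻¹ * φ x * (∫ y in Set.Ioc l x, ψ y ∂σ)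
            + w⁻¹ * ψ x * (∫ y in Set.Ioo x r, φ y ∂σ)) :
    Tendsto (fun δ : ℝ => (u (z + δ) - u z) / (F (z + δ) - F z))
        (nhdsWithin 0 (Set.Ioi 0))
        (nhds (w⁻¹ * (dφ * (∫ y in Set.Ioc l z, ψ y ∂σ)
            + dψ * (∫ y in Set.Ioo z r, φ y ∂σ)))) := by
  obtain ⟨hlz, hzr⟩ := hz
  have hzmem : z ∈ Set.Ioo l r := ⟨hlz, hzr⟩
  set A := ∫ y in Set.Ioc l z, ψ y ∂σ with hAdef
  set B := ∫ y in Set.Ioo z r, φ y ∂σ with hBdef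
  -- abbreviations
  set Iψ : ℝ → ℝ := fun δ => ∫ y in Set.Ioc z (z + δ), ψ y ∂σ with hIψdef
  set Iφ : ℝ → ℝ := fun δ => ∫ y in Set.Ioc z (z + δ), φ y ∂σ with hIφdef
  set m : ℝ → ℝ := fun δ => (σ (Set.Ioc z (z + δ))).toReal with hmdef
  set J : ℝ → ℝ := fun δ =>
      w⁻¹ * ((φ (z + δ) * Iψ δ - ψ (z + δ) * Iφ δ) / (F (z + δ) - F z)) with hJdef
  set R : ℝ → ℝ := fun δ =>
      w⁻¹ * (((φ (z + δ) - φ z) / (F (z + δ) - F z) * ψ z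
        - (ψ (z + δ) - ψ z) / (F (z + δ) - F z) * φ z) * m δ) with hRdef
  -- restricting the F-derivative limits to the right filter
  have hsub0 : Set.Ioi (0:ℝ) ⊆ ({(0:ℝ)}ᶜ : Set ℝ) := by
    intro x hx
    simp only [Set.mem_compl_iff, Set.mem_singleton_iff]
    exact ne_of_gt hx
  have hψF' : Tendsto (fun δ : ℝ => (ψ (z + δ) - ψ z) / (F (z + δ) - F z))
      (nhdsWithin 0 (Set.Ioi 0)) (nhds dψ) := hψF.mono_left (nhdsWithin_mono _ hsub0)
  have hφF' : Tendsto (fun δ : ℝ => (φ (z + δ) - φ z) / (F (z + δ) - F z))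
      (nhdsWithin 0 (Set.Ioi 0)) (nhds dφ) := hφF.mono_left (nhdsWithin_mono _ hsub0)
  -- eventually δ is small
  have hmemev : ∀ᶠ δ in nhdsWithin (0:ℝ) (Set.Ioi 0), 0 < δ ∧ z + δ < r := by
    filter_upwards [Ioo_mem_nhdsGT_of_mem
      (⟨le_refl (0:ℝ), by linarith⟩ : (0:ℝ) ∈ Set.Ico (0:ℝ) (r - z))] with δ hδ
    exact ⟨hδ.1, by linarith [hδ.2]⟩
  -- per-δ facts
  have hfacts : ∀ δ : ℝ, 0 < δ → z + δ < r →
      z + δ ∈ Set.Ioo l r ∧ 0 < F (z + δ) - F z ∧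
      IntegrableOn ψ (Set.Ioc z (z + δ)) σ ∧ IntegrableOn φ (Set.Ioc z (z + δ)) σ ∧
      σ (Set.Ioc z (z + δ)) < ⊤ := by
    intro δ h1 h2
    have hmem : z + δ ∈ Set.Ioo l r := ⟨by linarith, h2⟩
    refine ⟨hmem, sub_pos.mpr (hFmono hzmem hmem (by linarith)), ?_, ?_, ?_⟩
    · exact (hψint (z + δ) hmem).mono_set (Set.Ioc_subset_Ioc_left hlz.le)
    · exact (hφint z hzmem).mono_set (fun y hy => ⟨hy.1, lt_of_le_of_lt hy.2 h2⟩)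
    · exact lt_of_le_of_lt (measure_mono Set.Ioc_subset_Icc_self)
        (isCompact_Icc.measure_lt_top)
  -- the measure of (z, z+δ] tends to 0
  have hm0 : Tendsto m (nhdsWithin (0:ℝ) (Set.Ioi 0)) (nhds 0) := by
    have h1 : Tendsto (fun δ : ℝ => σ (Set.Ioc z (z + δ)))
        (nhdsWithin (0:ℝ) (Set.Ioi 0)) (nhds 0) := by
      have hiInter : (⋂ δ > (0:ℝ), Set.Ioc z (z + δ)) = ∅ := by
        ext y
        simp only [Set.mem_iInter, Set.mem_Ioc, Set.mem_empty_iff_false, iff_false]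
        intro h
        by_cases hy : z < y
        · have := (h ((y - z) / 2) (by linarith)).2; linarith
        · exact hy (h 1 one_pos).1
      have := tendsto_measure_biInter_gt (μ := σ)
        (s := fun δ : ℝ => Set.Ioc z (z + δ)) (a := 0)
        (fun d _ => measurableSet_Ioc.nullMeasurableSet)
        (fun i j hi hij => Set.Ioc_subset_Ioc_right (by linarith))
        ⟨1, one_pos, by
          exact ne_of_lt (lt_of_le_of_lt (measure_mono Set.Ioc_subset_Icc_self)
            (isCompact_Icc.measure_lt_top))⟩
      rw [hiInter, measure_empty] at this
      exact this
    have h2 := (ENNReal.tendsto_toReal (by simp : (0:ENNReal) ≠ ⊤)).comp h1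
    simpa [hmdef, Function.comp_def] using h2
  -- R tends to 0
  have hR0 : Tendsto R (nhdsWithin (0:ℝ) (Set.Ioi 0)) (nhds 0) := by
    have hg : Tendsto (fun δ : ℝ => ((φ (z + δ) - φ z) / (F (z + δ) - F z) * ψ z
        - (ψ (z + δ) - ψ z) / (F (z + δ) - F z) * φ z) * m δ)
        (nhdsWithin (0:ℝ) (Set.Ioi 0)) (nhds ((dφ * ψ z - dψ * φ z) * 0)) :=
      ((hφF'.mul_const (ψ z)).sub (hψF'.mul_const (φ z))).mul hm0
    have := hg.const_mul w⁻¹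
    simpa [hRdef] using this
  -- J squeezed between R and 0
  have hRJ : ∀ᶠ δ in nhdsWithin (0:ℝ) (Set.Ioi 0), R δ ≤ J δ := by
    filter_upwards [hmemev] with δ hδ
    obtain ⟨h1, h2⟩ := hδ
    obtain ⟨hmem, hΔF, hψs, hφs, hsfin⟩ := hfacts δ h1 h2
    have hsubI : Set.Ioc z (z + δ) ⊆ Set.Ioo l r := fun y hy =>
      ⟨by linarith [hy.1], by linarith [hy.2]⟩
    have hconst : ∀ c : ℝ, IntegrableOn (fun _ => c) (Set.Ioc z (z + δ)) σ :=
      fun c => integrableOn_const hsfin.ne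
    have hm_nonneg : 0 ≤ m δ := ENNReal.toReal_nonneg
    -- lower bound for Iψ
    have hIψlb : ψ z * m δ ≤ Iψ δ := by
      have := setIntegral_mono_on (hconst (ψ z)) hψs measurableSet_Ioc
        (fun y hy => hψmono hzmem (hsubI hy) hy.1.le)
      rwa [setIntegral_const, smul_eq_mul, mul_comm] at this
    -- upper bound for Iφ
    have hIφub : Iφ δ ≤ φ z * m δ := by
      have := setIntegral_mono_on hφs (hconst (φ z)) measurableSet_Ioc
        (fun y hy => hφanti hzmem (hsubI hy) hy.1.le)
      rwa [setIntegral_const, smul_eq_mul, mul_comm] at this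
    have hφpos' : 0 < φ (z + δ) := hφpos _ hmem
    have hψpos' : 0 < ψ (z + δ) := hψpos _ hmem
    have hnum : (φ (z + δ) * ψ z - ψ (z + δ) * φ z) * m δ
        ≤ φ (z + δ) * Iψ δ - ψ (z + δ) * Iφ δ := by
      have e1 : φ (z + δ) * (ψ z * m δ) ≤ φ (z + δ) * Iψ δ :=
        mul_le_mul_of_nonneg_left hIψlb hφpos'.le
      have e2 : ψ (z + δ) * Iφ δ ≤ ψ (z + δ) * (φ z * m δ) :=
        mul_le_mul_of_nonneg_left hIφub hψpos'.le
      nlinarith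
    have hdiv : (φ (z + δ) * ψ z - ψ (z + δ) * φ z) * m δ / (F (z + δ) - F z)
        ≤ (φ (z + δ) * Iψ δ - ψ (z + δ) * Iφ δ) / (F (z + δ) - F z) := by
      gcongr
    have hReq : R δ = w⁻¹ * ((φ (z + δ) * ψ z - ψ (z + δ) * φ z) * m δ
        / (F (z + δ) - F z)) := by
      simp only [hRdef]
      congr 1
      rw [div_mul_eq_mul_div, div_mul_eq_mul_div, ← sub_div, div_mul_eq_mul_div]
      congr 1
      ring
    rw [hReq, hJdef]
    exact mul_le_mul_of_nonneg_left hdiv (inv_nonneg.mpr hw.le)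
  have hJ0' : ∀ᶠ δ in nhdsWithin (0:ℝ) (Set.Ioi 0), J δ ≤ 0 := by
    filter_upwards [hmemev] with δ hδ
    obtain ⟨h1, h2⟩ := hδ
    obtain ⟨hmem, hΔF, hψs, hφs, hsfin⟩ := hfacts δ h1 h2
    have hsubI : Set.Ioc z (z + δ) ⊆ Set.Ioo l r := fun y hy =>
      ⟨by linarith [hy.1], by linarith [hy.2]⟩
    have hconst : ∀ c : ℝ, IntegrableOn (fun _ => c) (Set.Ioc z (z + δ)) σ :=
      fun c => integrableOn_const hsfin.ne
    have hIψub : Iψ δ ≤ ψ (z + δ) * m δ := by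
      have := setIntegral_mono_on hψs (hconst (ψ (z + δ))) measurableSet_Ioc
        (fun y hy => hψmono (hsubI hy) hmem hy.2)
      rwa [setIntegral_const, smul_eq_mul, mul_comm] at this
    have hIφlb : φ (z + δ) * m δ ≤ Iφ δ := by
      have := setIntegral_mono_on (hconst (φ (z + δ))) hφs measurableSet_Ioc
        (fun y hy => hφanti (hsubI hy) hmem hy.2)
      rwa [setIntegral_const, smul_eq_mul, mul_comm] at this
    have hφpos' : 0 < φ (z + δ) := hφpos _ hmem
    have hψpos' : 0 < ψ (z + δ) := hψpos _ hmem
    have hnum : φ (z + δ) * Iψ δ - ψ (z + δ) * Iφ δ ≤ 0 := by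
      have e1 : φ (z + δ) * Iψ δ ≤ φ (z + δ) * (ψ (z + δ) * m δ) :=
        mul_le_mul_of_nonneg_left hIψub hφpos'.le
      have e2 : ψ (z + δ) * (φ (z + δ) * m δ) ≤ ψ (z + δ) * Iφ δ :=
        mul_le_mul_of_nonneg_left hIφlb hψpos'.le
      nlinarith
    have : (φ (z + δ) * Iψ δ - ψ (z + δ) * Iφ δ) / (F (z + δ) - F z) ≤ 0 :=
      div_nonpos_iff.mpr (Or.inr ⟨hnum, hΔF.le⟩)
    simp only [hJdef]
    exact mul_nonpos_iff.mpr (Or.inl ⟨inv_nonneg.mpr hw.le, this⟩)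
  have hJ0 : Tendsto J (nhdsWithin (0:ℝ) (Set.Ioi 0)) (nhds 0) :=
    tendsto_of_tendsto_of_tendsto_of_le_of_le' hR0 tendsto_const_nhds hRJ hJ0'
  -- main term
  have hmain : Tendsto (fun δ : ℝ =>
      w⁻¹ * ((φ (z + δ) - φ z) / (F (z + δ) - F z) * A
        + (ψ (z + δ) - ψ z) / (F (z + δ) - F z) * B) + J δ)
      (nhdsWithin (0:ℝ) (Set.Ioi 0)) (nhds (w⁻¹ * (dφ * A + dψ * B) + 0)) :=
    (((hφF'.mul_const A).add (hψF'.mul_const B)).const_mul w⁻¹).add hJ0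
  rw [add_zero] at hmain
  -- eventual equality of difference quotients
  refine hmain.congr' ?_
  filter_upwards [hmemev] with δ hδ
  obtain ⟨h1, h2⟩ := hδ
  obtain ⟨hmem, hΔF, hψs, hφs, hsfin⟩ := hfacts δ h1 h2
  have hsplit1 : ∫ y in Set.Ioc l (z + δ), ψ y ∂σ = A + Iψ δ := by
    rw [show Set.Ioc l (z + δ) = Set.Ioc l z ∪ Set.Ioc z (z + δ) from
      (Set.Ioc_union_Ioc_eq_Ioc hlz.le (by linarith)).symm,
      setIntegral_union (Set.Ioc_disjoint_Ioc_of_le le_rfl) measurableSet_Ioc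
        (hψint z hzmem) hψs]
  have hdisj2 : Disjoint (Set.Ioc z (z + δ)) (Set.Ioo (z + δ) r) := by
    rw [Set.disjoint_left]
    intro y hy1 hy2
    exact absurd hy1.2 (not_le.mpr hy2.1)
  have hsplit2 : ∫ y in Set.Ioo z r, φ y ∂σ
      = Iφ δ + ∫ y in Set.Ioo (z + δ) r, φ y ∂σ := by
    rw [show Set.Ioo z r = Set.Ioc z (z + δ) ∪ Set.Ioo (z + δ) r from
      (Set.Ioc_union_Ioo_eq_Ioo (by linarith) h2).symm,
      setIntegral_union hdisj2 measurableSet_Ioo hφs (hφint (z + δ) hmem)]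
  have hBeq : B = Iφ δ + ∫ y in Set.Ioo (z + δ) r, φ y ∂σ := by
    rw [hBdef]; exact hsplit2
  have hc : F (z + δ) - F z ≠ 0 := ne_of_gt hΔF
  rw [hu (z + δ) hmem, hu z hzmem, hsplit1, ← hAdef, ← hBdef, hBeq, hJdef]
  field_simp
  ring
end

section
/- Under the same hypotheses (u(x) = w⁻¹φ(x)∫_{(l,x]}ψdσ + w⁻¹ψ(x)∫_{(x,r)}φdσ with ψ, φ F-differentiable at z), both one-sided F-derivatives of u exist at z and d⁻u/dF(z) − d⁺u/dF(z) = w⁻¹( (dψ/dF)(z)φ(z) − (dφ/dF)(z)ψ(z) )·σ({z}) ≥ 0. In particular u is F-differentiable at z if and only if σ({z}) = 0 (provided the Wronskian-type factor (dψ/dF)(z)φ(z) − (dφ/dF)(z)ψ(z) is strictly positive). -/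
open MeasureTheory Set Filter

lemma shrink_right (σ : Measure ℝ) [IsLocallyFiniteMeasure σ] (z : ℝ) :
    Tendsto (fun δ : ℝ => (σ (Set.Ioc z (z + δ))).toReal) (nhdsWithin 0 (Set.Ioi 0)) (nhds 0) := by
  have h : Tendsto (fun δ : ℝ => σ (Set.Ioc z (z + δ))) (nhdsWithin 0 (Set.Ioi 0))
      (nhds (σ (⋂ δ > (0:ℝ), Set.Ioc z (z + δ)))) := by
    have := tendsto_measure_biInter_gt (μ := σ) (a := (0:ℝ))
      (s := fun δ => Set.Ioc z (z + δ))
      (fun δ _ => measurableSet_Ioc.nullMeasurableSet)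
      (fun i j _ hij => Set.Ioc_subset_Ioc_right (by linarith))
      ⟨1, one_pos, ((measure_mono Set.Ioc_subset_Icc_self).trans_lt
        (isCompact_Icc.measure_lt_top)).ne⟩
    simpa [Function.comp_def] using this
  have he : (⋂ δ > (0:ℝ), Set.Ioc z (z + δ)) = ∅ := by
    ext x
    simp only [Set.mem_iInter, Set.mem_Ioc, Set.mem_empty_iff_false, iff_false, not_forall]
    by_contra hx
    push_neg at hx
    have h1 := hx 1 one_pos
    have h2 := hx ((x - z)/2) (by linarith [h1.1])
    linarith [h1.1, h2.2]
  rw [he, measure_empty] at h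
  have := (ENNReal.tendsto_toReal ENNReal.zero_ne_top).comp h
  simpa [Function.comp_def] using this

lemma shrink_left (σ : Measure ℝ) [IsLocallyFiniteMeasure σ] (z : ℝ) :
    Tendsto (fun δ : ℝ => (σ (Set.Ioo (z - δ) z)).toReal) (nhdsWithin 0 (Set.Ioi 0)) (nhds 0) := by
  have h : Tendsto (fun δ : ℝ => σ (Set.Ioo (z - δ) z)) (nhdsWithin 0 (Set.Ioi 0))
      (nhds (σ (⋂ δ > (0:ℝ), Set.Ioo (z - δ) z))) := by
    have := tendsto_measure_biInter_gt (μ := σ) (a := (0:ℝ))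
      (s := fun δ => Set.Ioo (z - δ) z)
      (fun δ _ => measurableSet_Ioo.nullMeasurableSet)
      (fun i j _ hij => Set.Ioo_subset_Ioo_left (by linarith))
      ⟨1, one_pos, ((measure_mono Set.Ioo_subset_Icc_self).trans_lt
        (isCompact_Icc.measure_lt_top)).ne⟩
    simpa [Function.comp_def] using this
  have he : (⋂ δ > (0:ℝ), Set.Ioo (z - δ) z) = ∅ := by
    ext x
    simp only [Set.mem_iInter, Set.mem_Ioo, Set.mem_empty_iff_false, iff_false, not_forall]
    by_contra hx
    push_neg at hx
    have h1 := hx 1 one_pos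
    have h2 := hx ((z - x)/2) (by linarith [h1.2])
    linarith [h1.2, h2.1]
  rw [he, measure_empty] at h
  have := (ENNReal.tendsto_toReal ENNReal.zero_ne_top).comp h
  simpa [Function.comp_def] using this

set_option maxHeartbeats 2000000 in
/-- both one-sided `F`-derivatives of
`u(x) = w⁻¹φ(x)∫_{(l,x]}ψ dσ + w⁻¹ψ(x)∫_{(x,r)}φ dσ` exist at `z`, and
`d⁻u/dF(z) − d⁺u/dF(z) = w⁻¹((dψ/dF)(z)φ(z) − (dφ/dF)(z)ψ(z))·σ({z}) ≥ 0`;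
`u` is `F`-differentiable at `z` iff `σ({z}) = 0` (given the strictly positive
Wronskian-type factor). -/
theorem stmt14 (l r : ℝ) (z : ℝ) (hz : z ∈ Set.Ioo l r)
    (σ : Measure ℝ) [IsLocallyFiniteMeasure σ]
    (hσ : σ (Set.Ioo l r)ᶜ = 0)
    (ψ φ F : ℝ → ℝ) (w : ℝ) (hw : 0 < w)
    (hFc : ContinuousOn F (Set.Ioo l r)) (hFmono : StrictMonoOn F (Set.Ioo l r))
    (hψc : ContinuousOn ψ (Set.Ioo l r)) (hφc : ContinuousOn φ (Set.Ioo l r))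
    (hψpos : ∀ x ∈ Set.Ioo l r, 0 < ψ x) (hφpos : ∀ x ∈ Set.Ioo l r, 0 < φ x)
    (hψmono : MonotoneOn ψ (Set.Ioo l r)) (hφanti : AntitoneOn φ (Set.Ioo l r))
    (hψint : ∀ x ∈ Set.Ioo l r, IntegrableOn ψ (Set.Ioc l x) σ)
    (hφint : ∀ x ∈ Set.Ioo l r, IntegrableOn φ (Set.Ioo x r) σ)
    (dψ dφ : ℝ)
    (hψF : Tendsto (fun δ : ℝ => (ψ (z + δ) - ψ z) / (F (z + δ) - F z))
        (nhdsWithin 0 ({0}ᶜ)) (nhds dψ))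
    (hφF : Tendsto (fun δ : ℝ => (φ (z + δ) - φ z) / (F (z + δ) - F z))
        (nhdsWithin 0 ({0}ᶜ)) (nhds dφ))
    (u : ℝ → ℝ)
    (hu : ∀ x ∈ Set.Ioo l r,
        u x = w⁻¹ * φ x * (∫ y in Set.Ioc l x, ψ y ∂σ)
            + w⁻¹ * ψ x * (∫ y in Set.Ioo x r, φ y ∂σ)) :
    ∃ Dp Dm : ℝ,
      Tendsto (fun δ : ℝ => (u (z + δ) - u z) / (F (z + δ) - F z))
          (nhdsWithin 0 (Set.Ioi 0)) (nhds Dp) ∧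
      Tendsto (fun δ : ℝ => (u (z - δ) - u z) / (F (z - δ) - F z))
          (nhdsWithin 0 (Set.Ioi 0)) (nhds Dm) ∧
      Dm - Dp = w⁻¹ * (dψ * φ z - dφ * ψ z) * (σ {z}).toReal ∧
      0 ≤ Dm - Dp ∧
      (0 < dψ * φ z - dφ * ψ z → (Dm = Dp ↔ σ {z} = 0)) := by
  obtain ⟨hlz, hzr⟩ := hz
  have hzz : z ∈ Set.Ioo l r := ⟨hlz, hzr⟩
  set c : ℝ := (l + z) / 2 with hc_def
  have hlc : l < c := by rw [hc_def]; linarith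
  have hcz : c < z := by rw [hc_def]; linarith
  have hc : c ∈ Set.Ioo l r := ⟨hlc, by linarith⟩
  set δ0 : ℝ := min (z - c) (r - z) with hδ0_def
  have hδ0 : 0 < δ0 := lt_min (by linarith) (by linarith)
  have hδ0c : δ0 ≤ z - c := min_le_left _ _
  have hδ0r : δ0 ≤ r - z := min_le_right _ _
  -- σ{z} is finite
  have hsing : σ {z} ≠ ⊤ := by
    refine ((measure_mono (show {z} ⊆ Set.Icc (z - 1) (z + 1) by
      intro x hx; simp only [Set.mem_singleton_iff] at hx; subst hx
      constructor <;> linarith)).trans_lt isCompact_Icc.measure_lt_top).ne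
  set m : ℝ := (σ {z}).toReal with hm_def
  have hm0 : 0 ≤ m := ENNReal.toReal_nonneg
  -- basic integrability
  have hψz : IntegrableOn ψ (Set.Ioc l z) σ := hψint z hzz
  have hφcr : IntegrableOn φ (Set.Ioo c r) σ := hφint c hc
  have hsub_Ico : Set.Ico z r ⊆ Set.Ioo c r := fun y hy => ⟨lt_of_lt_of_le hcz hy.1, hy.2⟩
  have hsub_Ioozr : Set.Ioo z r ⊆ Set.Ioo c r := fun y hy => ⟨lt_trans hcz hy.1, hy.2⟩
  have hsub_sing : ({z} : Set ℝ) ⊆ Set.Ioc l z := by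
    intro x hx; simp only [Set.mem_singleton_iff] at hx; subst hx; exact ⟨hlz, le_refl _⟩
  -- the key integrals
  have hAA' : (∫ y in Set.Ioc l z, ψ y ∂σ) = (∫ y in Set.Ioo l z, ψ y ∂σ) + ψ z * m := by
    rw [← Set.Ioo_union_right hlz,
      setIntegral_union (Set.disjoint_singleton_right.mpr (by simp))
        (measurableSet_singleton z) (hψz.mono_set Set.Ioo_subset_Ioc_self)
        (hψz.mono_set hsub_sing), integral_singleton, smul_eq_mul, mul_comm]
    rfl
  have hBB' : (∫ y in Set.Ico z r, φ y ∂σ) = φ z * m + (∫ y in Set.Ioo z r, φ y ∂σ) := by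
    rw [show Set.Ico z r = {z} ∪ Set.Ioo z r by
        rw [Set.union_comm, Set.Ioo_union_left hzr],
      setIntegral_union (by simp [Set.disjoint_singleton_left])
        measurableSet_Ioo (hφcr.mono_set (fun x hx => by
          simp only [Set.mem_singleton_iff] at hx; subst hx; exact ⟨hcz, hzr⟩))
        (hφcr.mono_set hsub_Ioozr), integral_singleton, smul_eq_mul, mul_comm (σ.real {z})]
    rfl
  -- derivative restrictions
  have hsubc : Set.Ioi (0:ℝ) ⊆ ({0}ᶜ : Set ℝ) := fun x hx => ne_of_gt hx
  have hRψp := hψF.mono_left (nhdsWithin_mono 0 hsubc)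
  have hRφp := hφF.mono_left (nhdsWithin_mono 0 hsubc)
  have hneg : Tendsto (fun δ : ℝ => -δ) (nhdsWithin 0 (Set.Ioi 0)) (nhdsWithin 0 ({0}ᶜ)) := by
    rw [tendsto_nhdsWithin_iff]
    constructor
    · simpa using ((continuous_neg.tendsto (0:ℝ)).mono_left nhdsWithin_le_nhds)
    · filter_upwards [self_mem_nhdsWithin] with x hx
      simp only [Set.mem_compl_iff, Set.mem_singleton_iff]
      intro hx'
      simp only [Set.mem_Ioi] at hx
      linarith [neg_eq_zero.mp hx']
  have hRψm : Tendsto (fun δ : ℝ => (ψ (z - δ) - ψ z) / (F (z - δ) - F z))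
      (nhdsWithin 0 (Set.Ioi 0)) (nhds dψ) := by
    have := hψF.comp hneg
    simpa only [Function.comp_def, ← sub_eq_add_neg] using this
  have hRφm : Tendsto (fun δ : ℝ => (φ (z - δ) - φ z) / (F (z - δ) - F z))
      (nhdsWithin 0 (Set.Ioi 0)) (nhds dφ) := by
    have := hφF.comp hneg
    simpa only [Function.comp_def, ← sub_eq_add_neg] using this
  have hmr := shrink_right σ z
  have hml := shrink_left σ z
  have hIoo0 : Set.Ioo (0:ℝ) δ0 ∈ nhdsWithin (0:ℝ) (Set.Ioi 0) :=
    Ioo_mem_nhdsGT_of_mem ⟨le_refl _, hδ0⟩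
  -- facts for δ ∈ Ioo 0 δ0
  have hmemp : ∀ δ ∈ Set.Ioo (0:ℝ) δ0, z + δ ∈ Set.Ioo l r := by
    intro δ hδ; exact ⟨by linarith [hδ.1], by linarith [hδ.2, hδ0r]⟩
  have hmemm : ∀ δ ∈ Set.Ioo (0:ℝ) δ0, z - δ ∈ Set.Ioo l r ∧ c < z - δ := by
    intro δ hδ
    have h1 : c < z - δ := by linarith [hδ.2, hδ0c]
    exact ⟨⟨lt_trans hlc h1, by linarith [hδ.1]⟩, h1⟩
  have hFp : ∀ δ ∈ Set.Ioo (0:ℝ) δ0, 0 < F (z + δ) - F z := by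
    intro δ hδ; exact sub_pos.mpr (hFmono hzz (hmemp δ hδ) (by linarith [hδ.1]))
  have hFm : ∀ δ ∈ Set.Ioo (0:ℝ) δ0, F (z - δ) - F z < 0 := by
    intro δ hδ; exact sub_neg.mpr (hFmono (hmemm δ hδ).1 hzz (by linarith [hδ.1]))
  -- signs of derivatives
  have hdψ0 : 0 ≤ dψ := by
    refine ge_of_tendsto hRψp ?_
    filter_upwards [hIoo0] with δ hδ
    exact div_nonneg (sub_nonneg.mpr (hψmono hzz (hmemp δ hδ) (by linarith [hδ.1])))
      (le_of_lt (hFp δ hδ))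
  have hdφ0 : dφ ≤ 0 := by
    refine le_of_tendsto hRφp ?_
    filter_upwards [hIoo0] with δ hδ
    exact div_nonpos_iff.mpr (Or.inr ⟨sub_nonpos.mpr (hφanti hzz (hmemp δ hδ) (by linarith [hδ.1])),
      le_of_lt (hFp δ hδ)⟩)
  ------------------------------------------------------------------
  -- RIGHT derivative
  ------------------------------------------------------------------
  have hEp : Tendsto (fun δ : ℝ => (∫ y in Set.Ioc z (z + δ),
      (φ (z + δ) * ψ y - ψ (z + δ) * φ y) ∂σ) / (F (z + δ) - F z))
      (nhdsWithin 0 (Set.Ioi 0)) (nhds 0) := by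
    apply squeeze_zero_norm'
      (a := fun δ : ℝ => |φ z * ((ψ (z + δ) - ψ z) / (F (z + δ) - F z))
        - ψ z * ((φ (z + δ) - φ z) / (F (z + δ) - F z))| * (σ (Set.Ioc z (z + δ))).toReal)
    · filter_upwards [hIoo0] with δ hδ
      have hmem' := hmemp δ hδ
      have hF := hFp δ hδ
      set e : ℝ := φ z * (ψ (z + δ) - ψ z) - ψ z * (φ (z + δ) - φ z) with he_def
      have hψle : ψ z ≤ ψ (z + δ) := hψmono hzz hmem' (by linarith [hδ.1])
      have hφle : φ (z + δ) ≤ φ z := hφanti hzz hmem' (by linarith [hδ.1])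
      have hψzpos := hψpos z hzz
      have hφzpos := hφpos z hzz
      have hψ'pos := hψpos _ hmem'
      have hφ'pos := hφpos _ hmem'
      have he0 : 0 ≤ e := by rw [he_def]; nlinarith
      have hfin : σ (Set.Ioc z (z + δ)) < ⊤ :=
        (measure_mono Set.Ioc_subset_Icc_self).trans_lt isCompact_Icc.measure_lt_top
      have hbnd : ∀ y ∈ Set.Ioc z (z + δ), ‖φ (z + δ) * ψ y - ψ (z + δ) * φ y‖ ≤ e := by
        intro y hy
        have hyI : y ∈ Set.Ioo l r := ⟨lt_trans hlz hy.1, lt_of_le_of_lt hy.2 hmem'.2⟩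
        have h1 : ψ z ≤ ψ y := hψmono hzz hyI (le_of_lt hy.1)
        have h2 : ψ y ≤ ψ (z + δ) := hψmono hyI hmem' hy.2
        have h3 : φ (z + δ) ≤ φ y := hφanti hyI hmem' hy.2
        have h4 : φ y ≤ φ z := hφanti hzz hyI (le_of_lt hy.1)
        rw [Real.norm_eq_abs, abs_le, he_def]
        constructor <;> nlinarith
      have hnrm : ‖∫ y in Set.Ioc z (z + δ), (φ (z + δ) * ψ y - ψ (z + δ) * φ y) ∂σ‖
          ≤ e * (σ (Set.Ioc z (z + δ))).toReal :=
        norm_setIntegral_le_of_norm_le_const_ae hfin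
          ((ae_restrict_mem measurableSet_Ioc).mono hbnd)
      have hFne : F (z + δ) - F z ≠ 0 := ne_of_gt hF
      calc ‖(∫ y in Set.Ioc z (z + δ), (φ (z + δ) * ψ y - ψ (z + δ) * φ y) ∂σ)
            / (F (z + δ) - F z)‖
          = ‖∫ y in Set.Ioc z (z + δ), (φ (z + δ) * ψ y - ψ (z + δ) * φ y) ∂σ‖
            / (F (z + δ) - F z) := by
            rw [norm_div, Real.norm_eq_abs (F (z + δ) - F z), abs_of_pos hF]
        _ ≤ (e * (σ (Set.Ioc z (z + δ))).toReal) / (F (z + δ) - F z) := by gcongr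
        _ = (e / (F (z + δ) - F z)) * (σ (Set.Ioc z (z + δ))).toReal := by ring
        _ ≤ |e / (F (z + δ) - F z)| * (σ (Set.Ioc z (z + δ))).toReal :=
            mul_le_mul_of_nonneg_right (le_abs_self _) ENNReal.toReal_nonneg
        _ = |φ z * ((ψ (z + δ) - ψ z) / (F (z + δ) - F z))
            - ψ z * ((φ (z + δ) - φ z) / (F (z + δ) - F z))| * (σ (Set.Ioc z (z + δ))).toReal := by
            congr 1
            rw [he_def]
            congr 1
            field_simp
    · have := (((hRψp.const_mul (φ z)).sub (hRφp.const_mul (ψ z))).abs).mul hmr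
      simpa using this
  have hQp : Tendsto (fun δ : ℝ => (u (z + δ) - u z) / (F (z + δ) - F z))
      (nhdsWithin 0 (Set.Ioi 0))
      (nhds (w⁻¹ * (dφ * (∫ y in Set.Ioc l z, ψ y ∂σ) + dψ * (∫ y in Set.Ioo z r, φ y ∂σ)))) := by
    have hlim := Tendsto.const_mul w⁻¹
      ((((hRφp.mul_const (∫ y in Set.Ioc l z, ψ y ∂σ)).add
        (hRψp.mul_const (∫ y in Set.Ioo z r, φ y ∂σ))).add hEp))
    rw [add_zero] at hlim
    refine hlim.congr' ?_
    filter_upwards [hIoo0] with δ hδ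
    have hmem' := hmemp δ hδ
    have hF := hFp δ hδ
    have hFne : F (z + δ) - F z ≠ 0 := ne_of_gt hF
    have hzδ : z ≤ z + δ := by linarith [hδ.1]
    have hsubIoc : Set.Ioc z (z + δ) ⊆ Set.Ioo c r :=
      fun y hy => ⟨lt_trans hcz hy.1, lt_of_le_of_lt hy.2 hmem'.2⟩
    have hintψδ : IntegrableOn ψ (Set.Ioc z (z + δ)) σ :=
      (hψint (z + δ) hmem').mono_set (Set.Ioc_subset_Ioc_left (le_of_lt hlz))
    have hintφδ : IntegrableOn φ (Set.Ioc z (z + δ)) σ := hφcr.mono_set hsubIoc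
    have s1 : (∫ y in Set.Ioc l (z + δ), ψ y ∂σ)
        = (∫ y in Set.Ioc l z, ψ y ∂σ) + ∫ y in Set.Ioc z (z + δ), ψ y ∂σ := by
      rw [← Set.Ioc_union_Ioc_eq_Ioc (le_of_lt hlz) hzδ,
        setIntegral_union (Set.Ioc_disjoint_Ioc_of_le le_rfl) measurableSet_Ioc hψz hintψδ]
    have s2 : (∫ y in Set.Ioo z r, φ y ∂σ)
        = (∫ y in Set.Ioc z (z + δ), φ y ∂σ) + ∫ y in Set.Ioo (z + δ) r, φ y ∂σ := by
      rw [← Set.Ioc_union_Ioo_eq_Ioo hzδ hmem'.2,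
        setIntegral_union (by
          rw [Set.disjoint_left]; rintro y ⟨_, h1⟩ ⟨h2, _⟩; linarith)
          measurableSet_Ioo hintφδ (hφcr.mono_set (fun y hy =>
            ⟨lt_trans hcz (lt_of_le_of_lt hzδ hy.1), hy.2⟩))]
    have s3 : (∫ y in Set.Ioc z (z + δ), (φ (z + δ) * ψ y - ψ (z + δ) * φ y) ∂σ)
        = φ (z + δ) * (∫ y in Set.Ioc z (z + δ), ψ y ∂σ)
          - ψ (z + δ) * ∫ y in Set.Ioc z (z + δ), φ y ∂σ := by
      rw [integral_sub (hintψδ.const_mul _) (hintφδ.const_mul _),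
        integral_const_mul, integral_const_mul]
    have hwne : w ≠ 0 := ne_of_gt hw
    rw [hu _ hmem', hu z hzz, s1, s3]
    have s2' : (∫ y in Set.Ioo (z + δ) r, φ y ∂σ)
        = (∫ y in Set.Ioo z r, φ y ∂σ) - ∫ y in Set.Ioc z (z + δ), φ y ∂σ := by
      rw [s2]; ring
    rw [s2']
    field_simp
    ring
  ------------------------------------------------------------------
  -- LEFT derivative
  ------------------------------------------------------------------
  have hJψ : Tendsto (fun δ : ℝ => ∫ y in Set.Ioo (z - δ) z, ψ y ∂σ)
      (nhdsWithin 0 (Set.Ioi 0)) (nhds 0) := by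
    apply squeeze_zero_norm' (a := fun δ : ℝ => ψ z * (σ (Set.Ioo (z - δ) z)).toReal)
    · filter_upwards [hIoo0] with δ hδ
      have h1 := (hmemm δ hδ).2
      have hfin : σ (Set.Ioo (z - δ) z) < ⊤ :=
        (measure_mono Set.Ioo_subset_Icc_self).trans_lt isCompact_Icc.measure_lt_top
      refine norm_setIntegral_le_of_norm_le_const_ae hfin
        ((ae_restrict_mem measurableSet_Ioo).mono ?_)
      intro y hy
      have hyI : y ∈ Set.Ioo l r := ⟨lt_trans hlc (lt_trans h1 hy.1), lt_trans hy.2 hzr⟩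
      rw [Real.norm_eq_abs, abs_of_pos (hψpos y hyI)]
      exact hψmono hyI hzz (le_of_lt hy.2)
    · simpa using hml.const_mul (ψ z)
  have hJφ : Tendsto (fun δ : ℝ => ∫ y in Set.Ioo (z - δ) z, φ y ∂σ)
      (nhdsWithin 0 (Set.Ioi 0)) (nhds 0) := by
    apply squeeze_zero_norm' (a := fun δ : ℝ => φ c * (σ (Set.Ioo (z - δ) z)).toReal)
    · filter_upwards [hIoo0] with δ hδ
      have h1 := (hmemm δ hδ).2
      have hfin : σ (Set.Ioo (z - δ) z) < ⊤ :=
        (measure_mono Set.Ioo_subset_Icc_self).trans_lt isCompact_Icc.measure_lt_top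
      refine norm_setIntegral_le_of_norm_le_const_ae hfin
        ((ae_restrict_mem measurableSet_Ioo).mono ?_)
      intro y hy
      have hyI : y ∈ Set.Ioo l r := ⟨lt_trans hlc (lt_trans h1 hy.1), lt_trans hy.2 hzr⟩
      rw [Real.norm_eq_abs, abs_of_pos (hφpos y hyI)]
      exact hφanti hc hyI (le_of_lt (lt_trans h1 hy.1))
    · simpa using hml.const_mul (φ c)
  have hAδ : Tendsto (fun δ : ℝ => ∫ y in Set.Ioc l (z - δ), ψ y ∂σ)
      (nhdsWithin 0 (Set.Ioi 0)) (nhds (∫ y in Set.Ioo l z, ψ y ∂σ)) := by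
    have hlim := (tendsto_const_nhds (x := ∫ y in Set.Ioo l z, ψ y ∂σ)
      (f := nhdsWithin (0:ℝ) (Set.Ioi 0))).sub hJψ
    rw [sub_zero] at hlim
    refine hlim.congr' ?_
    filter_upwards [hIoo0] with δ hδ
    have h1 := (hmemm δ hδ).2
    have h2 : l < z - δ := lt_trans hlc h1
    have split : (∫ y in Set.Ioo l z, ψ y ∂σ)
        = (∫ y in Set.Ioc l (z - δ), ψ y ∂σ) + ∫ y in Set.Ioo (z - δ) z, ψ y ∂σ := by
      rw [← Set.Ioc_union_Ioo_eq_Ioo (le_of_lt h2) (by linarith [hδ.1] : z - δ < z),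
        setIntegral_union (by
          rw [Set.disjoint_left]; rintro y ⟨_, hy1⟩ ⟨hy2, _⟩; linarith)
          measurableSet_Ioo
          (hψz.mono_set (Set.Ioc_subset_Ioc_right (by linarith [hδ.1])))
          (hψz.mono_set (fun y hy => ⟨lt_trans h2 hy.1, le_of_lt hy.2⟩))]
    rw [split]; ring
  have hBδ : Tendsto (fun δ : ℝ => ∫ y in Set.Ioo (z - δ) r, φ y ∂σ)
      (nhdsWithin 0 (Set.Ioi 0)) (nhds (∫ y in Set.Ico z r, φ y ∂σ)) := by
    have hlim := hJφ.add (tendsto_const_nhds (x := ∫ y in Set.Ico z r, φ y ∂σ)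
      (f := nhdsWithin (0:ℝ) (Set.Ioi 0)))
    rw [zero_add] at hlim
    refine hlim.congr' ?_
    filter_upwards [hIoo0] with δ hδ
    have h1 := (hmemm δ hδ).2
    have split : (∫ y in Set.Ioo (z - δ) r, φ y ∂σ)
        = (∫ y in Set.Ioo (z - δ) z, φ y ∂σ) + ∫ y in Set.Ico z r, φ y ∂σ := by
      rw [← Set.Ioo_union_Ico_eq_Ioo (by linarith [hδ.1] : z - δ < z) (le_of_lt hzr),
        setIntegral_union (by
          rw [Set.disjoint_left]; rintro y ⟨_, hy1⟩ ⟨hy2, _⟩; linarith)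
          measurableSet_Ico
          (hφcr.mono_set (fun y hy => ⟨lt_trans h1 hy.1, lt_trans hy.2 hzr⟩))
          (hφcr.mono_set hsub_Ico)]
    rw [split]
  have hEm : Tendsto (fun δ : ℝ => (∫ y in Set.Ioo (z - δ) z,
      (ψ z * φ y - φ z * ψ y) ∂σ) / (F (z - δ) - F z))
      (nhdsWithin 0 (Set.Ioi 0)) (nhds 0) := by
    apply squeeze_zero_norm'
      (a := fun δ : ℝ => |ψ z * ((φ (z - δ) - φ z) / (F (z - δ) - F z))
        - φ z * ((ψ (z - δ) - ψ z) / (F (z - δ) - F z))| * (σ (Set.Ioo (z - δ) z)).toReal)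
    · filter_upwards [hIoo0] with δ hδ
      obtain ⟨hmem', h1⟩ := hmemm δ hδ
      have hF := hFm δ hδ
      have hFne : F (z - δ) - F z ≠ 0 := ne_of_lt hF
      set e : ℝ := ψ z * (φ (z - δ) - φ z) - φ z * (ψ (z - δ) - ψ z) with he_def
      have hψle : ψ (z - δ) ≤ ψ z := hψmono hmem' hzz (by linarith [hδ.1])
      have hφle : φ z ≤ φ (z - δ) := hφanti hmem' hzz (by linarith [hδ.1])
      have hψzpos := hψpos z hzz
      have hφzpos := hφpos z hzz
      have hψ'pos := hψpos _ hmem'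
      have hφ'pos := hφpos _ hmem'
      have he0 : 0 ≤ e := by rw [he_def]; nlinarith
      have hfin : σ (Set.Ioo (z - δ) z) < ⊤ :=
        (measure_mono Set.Ioo_subset_Icc_self).trans_lt isCompact_Icc.measure_lt_top
      have hbnd : ∀ y ∈ Set.Ioo (z - δ) z, ‖ψ z * φ y - φ z * ψ y‖ ≤ e := by
        intro y hy
        have hyI : y ∈ Set.Ioo l r := ⟨lt_trans hlc (lt_trans h1 hy.1), lt_trans hy.2 hzr⟩
        have h2 : ψ (z - δ) ≤ ψ y := hψmono hmem' hyI (le_of_lt hy.1)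
        have h3 : ψ y ≤ ψ z := hψmono hyI hzz (le_of_lt hy.2)
        have h4 : φ z ≤ φ y := hφanti hyI hzz (le_of_lt hy.2)
        have h5 : φ y ≤ φ (z - δ) := hφanti hmem' hyI (le_of_lt hy.1)
        rw [Real.norm_eq_abs, abs_le, he_def]
        constructor <;> nlinarith
      have hnrm : ‖∫ y in Set.Ioo (z - δ) z, (ψ z * φ y - φ z * ψ y) ∂σ‖
          ≤ e * (σ (Set.Ioo (z - δ) z)).toReal :=
        norm_setIntegral_le_of_norm_le_const_ae hfin
          ((ae_restrict_mem measurableSet_Ioo).mono hbnd)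
      calc ‖(∫ y in Set.Ioo (z - δ) z, (ψ z * φ y - φ z * ψ y) ∂σ) / (F (z - δ) - F z)‖
          = ‖∫ y in Set.Ioo (z - δ) z, (ψ z * φ y - φ z * ψ y) ∂σ‖
            / |F (z - δ) - F z| := by rw [norm_div, Real.norm_eq_abs (F (z - δ) - F z)]
        _ ≤ (e * (σ (Set.Ioo (z - δ) z)).toReal) / |F (z - δ) - F z| := by gcongr
        _ = (e / |F (z - δ) - F z|) * (σ (Set.Ioo (z - δ) z)).toReal := by ring
        _ = |e / (F (z - δ) - F z)| * (σ (Set.Ioo (z - δ) z)).toReal := by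
            rw [abs_div, abs_of_nonneg he0]
        _ = |ψ z * ((φ (z - δ) - φ z) / (F (z - δ) - F z))
            - φ z * ((ψ (z - δ) - ψ z) / (F (z - δ) - F z))| * (σ (Set.Ioo (z - δ) z)).toReal := by
            congr 1
            congr 1
            rw [he_def]
            field_simp
    · have := (((hRφm.const_mul (ψ z)).sub (hRψm.const_mul (φ z))).abs).mul hml
      simpa using this
  have hQm : Tendsto (fun δ : ℝ => (u (z - δ) - u z) / (F (z - δ) - F z))
      (nhdsWithin 0 (Set.Ioi 0))
      (nhds (w⁻¹ * (dφ * (∫ y in Set.Ioo l z, ψ y ∂σ) + dψ * (∫ y in Set.Ico z r, φ y ∂σ)))) := by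
    have hlim := Tendsto.const_mul w⁻¹
      (((hRφm.mul hAδ).add (hRψm.mul hBδ)).add hEm)
    rw [add_zero] at hlim
    refine hlim.congr' ?_
    filter_upwards [hIoo0] with δ hδ
    obtain ⟨hmem', h1⟩ := hmemm δ hδ
    have hF := hFm δ hδ
    have hFne : F (z - δ) - F z ≠ 0 := ne_of_lt hF
    have hwne : w ≠ 0 := ne_of_gt hw
    have h2 : l < z - δ := lt_trans hlc h1
    have hzδ : z - δ ≤ z := by linarith [hδ.1]
    have hzδ' : z - δ < z := by linarith [hδ.1]
    have hintψJ : IntegrableOn ψ (Set.Ioo (z - δ) z) σ :=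
      hψz.mono_set (fun y hy => ⟨lt_trans h2 hy.1, le_of_lt hy.2⟩)
    have hintφJ : IntegrableOn φ (Set.Ioo (z - δ) z) σ :=
      hφcr.mono_set (fun y hy => ⟨lt_trans h1 hy.1, lt_trans hy.2 hzr⟩)
    have hintψsing : IntegrableOn ψ ({z} : Set ℝ) σ := hψz.mono_set hsub_sing
    have hintφsing : IntegrableOn φ ({z} : Set ℝ) σ := hφcr.mono_set (fun x hx => by
      simp only [Set.mem_singleton_iff] at hx; subst hx; exact ⟨hcz, hzr⟩)
    -- splits
    have e1 : (∫ y in Set.Ioc (z - δ) z, ψ y ∂σ)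
        = (∫ y in Set.Ioo (z - δ) z, ψ y ∂σ) + ψ z * m := by
      rw [← Set.Ioo_union_right hzδ',
        setIntegral_union (Set.disjoint_singleton_right.mpr (by simp))
          (measurableSet_singleton z) hintψJ hintψsing, integral_singleton, smul_eq_mul,
          mul_comm]
      rfl
    have e2 : (∫ y in Set.Ioc l z, ψ y ∂σ)
        = (∫ y in Set.Ioc l (z - δ), ψ y ∂σ) + ∫ y in Set.Ioc (z - δ) z, ψ y ∂σ := by
      rw [← Set.Ioc_union_Ioc_eq_Ioc (le_of_lt h2) hzδ,
        setIntegral_union (Set.Ioc_disjoint_Ioc_of_le le_rfl) measurableSet_Ioc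
          (hψz.mono_set (Set.Ioc_subset_Ioc_right hzδ))
          (hψz.mono_set (fun y hy => ⟨lt_trans h2 hy.1, hy.2⟩))]
    have e3 : (∫ y in Set.Ioc (z - δ) z, φ y ∂σ)
        = (∫ y in Set.Ioo (z - δ) z, φ y ∂σ) + φ z * m := by
      rw [← Set.Ioo_union_right hzδ',
        setIntegral_union (Set.disjoint_singleton_right.mpr (by simp))
          (measurableSet_singleton z) hintφJ hintφsing, integral_singleton, smul_eq_mul,
          mul_comm]
      rfl
    have e4 : (∫ y in Set.Ioo (z - δ) r, φ y ∂σ)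
        = (∫ y in Set.Ioc (z - δ) z, φ y ∂σ) + ∫ y in Set.Ioo z r, φ y ∂σ := by
      rw [← Set.Ioc_union_Ioo_eq_Ioo hzδ hzr,
        setIntegral_union (by
          rw [Set.disjoint_left]; rintro y ⟨_, hy1⟩ ⟨hy2, _⟩; linarith)
          measurableSet_Ioo
          (hφcr.mono_set (fun y hy => ⟨lt_trans h1 hy.1, lt_of_le_of_lt hy.2 hzr⟩))
          (hφcr.mono_set hsub_Ioozr)]
    have e5 : (∫ y in Set.Ioo (z - δ) z, (ψ z * φ y - φ z * ψ y) ∂σ)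
        = ψ z * (∫ y in Set.Ioo (z - δ) z, φ y ∂σ)
          - φ z * ∫ y in Set.Ioo (z - δ) z, ψ y ∂σ := by
      rw [integral_sub (hintφJ.const_mul _) (hintψJ.const_mul _),
        integral_const_mul, integral_const_mul]
    rw [hu _ hmem', hu z hzz, e2, e1, e4, e3, e5]
    field_simp
    ring
  ------------------------------------------------------------------
  -- conclusion
  ------------------------------------------------------------------
  refine ⟨w⁻¹ * (dφ * (∫ y in Set.Ioc l z, ψ y ∂σ) + dψ * (∫ y in Set.Ioo z r, φ y ∂σ)),
    w⁻¹ * (dφ * (∫ y in Set.Ioo l z, ψ y ∂σ) + dψ * (∫ y in Set.Ico z r, φ y ∂σ)),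
    hQp, hQm, ?_, ?_, ?_⟩
  · rw [hAA', hBB']; ring
  · rw [hAA', hBB']
    have hφzpos := hφpos z hzz
    have hψzpos := hψpos z hzz
    have hwinv : 0 ≤ w⁻¹ := le_of_lt (inv_pos.mpr hw)
    nlinarith [mul_nonneg (mul_nonneg hwinv (mul_nonneg hdψ0 (le_of_lt hφzpos))) hm0,
      mul_nonneg (mul_nonneg hwinv (mul_nonneg (neg_nonneg.mpr hdφ0) (le_of_lt hψzpos))) hm0]
  · intro hpos
    have hdiff : w⁻¹ * (dφ * (∫ y in Set.Ioo l z, ψ y ∂σ) + dψ * (∫ y in Set.Ico z r, φ y ∂σ))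
        - w⁻¹ * (dφ * (∫ y in Set.Ioc l z, ψ y ∂σ) + dψ * (∫ y in Set.Ioo z r, φ y ∂σ))
        = w⁻¹ * (dψ * φ z - dφ * ψ z) * m := by
      rw [hAA', hBB']; ring
    constructor
    · intro heq
      rw [heq, sub_self] at hdiff
      have hm' : m = 0 := by
        have h1 : w⁻¹ ≠ 0 := inv_ne_zero (ne_of_gt hw)
        have h2 : dψ * φ z - dφ * ψ z ≠ 0 := ne_of_gt hpos
        have := hdiff.symm
        rcases mul_eq_zero.mp this with h | h
        · rcases mul_eq_zero.mp h with h' | h'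
          · exact absurd h' h1
          · exact absurd h' h2
        · exact h
      rw [hm_def] at hm'
      exact (ENNReal.toReal_eq_zero_iff _).mp hm' |>.resolve_right hsing
    · intro hσz
      have hm' : m = 0 := by rw [hm_def, hσz, ENNReal.toReal_zero]
      rw [hm', mul_zero] at hdiff
      linarith [hdiff]
end

section
/- Let g(x) = (1+x)⁺ and ψ_α the increasing fundamental solution of driftless sticky Brownian motion with stickiness c at 0 (ψ_α(0)=1). On any subinterval of (−1, x*) not containing 0 where t(x) = g(x)ψ_α'(x) − g'(x)ψ_α(x) < 0, the quotient q(x) = g(x)/ψ_α(x) is strictly increasing; consequently g(x)/ψ_α(x) < g(x*)/ψ_α(x*) for all −1 < x < x*, i.e., g(x) < V*(x) := (g(x*)/ψ_α(x*))·ψ_α(x) on (−1, x*). -/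
open Real Set

/-- with `g(x) = (1+x)⁺`, `ψ_α` the increasing fundamental
solution of driftless sticky Brownian motion, and
`t(x) = g(x)ψ_α'(x) − g'(x)ψ_α(x)`: on any subinterval of `(−1, x*)` not
containing `0` (where `t < 0`) the quotient `q = g/ψ_α` is strictly increasing;
consequently `g(x) < V*(x) := (g(x*)/ψ_α(x*))·ψ_α(x)` for all `x ∈ (−1, x*)`. -/
theorem stmt17 (α c : ℝ) (hα : 0 < α) (hc : 0 < c)
    (γ : ℝ) (hγ : γ = c * α / Real.sqrt (2 * α))
    (ψ : ℝ → ℝ)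
    (hψneg : ∀ x ≤ (0:ℝ), ψ x = Real.exp (Real.sqrt (2 * α) * x))
    (hψpos : ∀ x ≥ (0:ℝ), ψ x = (1 + γ) * Real.exp (Real.sqrt (2 * α) * x)
        - γ * Real.exp (-(Real.sqrt (2 * α)) * x))
    (g : ℝ → ℝ) (hg : ∀ x : ℝ, -1 < x → g x = 1 + x)
    (t : ℝ → ℝ)
    (ht : ∀ x : ℝ, -1 < x → x ≠ 0 → t x = g x * deriv ψ x - ψ x)
    (xstar : ℝ) (hxstar : -1 < xstar)
    (htneg : ∀ x ∈ Set.Ioo (-1 : ℝ) xstar, x ≠ 0 → t x < 0)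
    (q : ℝ → ℝ) (hq : ∀ x : ℝ, -1 < x → q x = g x / ψ x) :
    (∀ a b : ℝ, Set.Ioo a b ⊆ Set.Ioo (-1 : ℝ) xstar → (0:ℝ) ∉ Set.Ioo a b →
        StrictMonoOn q (Set.Ioo a b)) ∧
    (∀ x ∈ Set.Ioo (-1 : ℝ) xstar, q x < q xstar) ∧
    (∀ x ∈ Set.Ioo (-1 : ℝ) xstar, g x < (g xstar / ψ xstar) * ψ x) := by
  have h2α : (0:ℝ) < 2 * α := by linarith
  have hγ0 : 0 < γ := by
    rw [hγ]; exact div_pos (mul_pos hc hα) (Real.sqrt_pos.mpr h2α)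
  -- ψ is positive everywhere
  have hψpos' : ∀ x, 0 < ψ x := by
    intro x
    rcases le_or_gt x 0 with h | h
    · rw [hψneg x h]; exact Real.exp_pos _
    · rw [hψpos x h.le]
      have h1 : Real.exp (-(Real.sqrt (2*α)) * x) ≤ Real.exp (Real.sqrt (2*α) * x) :=
        Real.exp_le_exp.mpr (by nlinarith [Real.sqrt_nonneg (2*α)])
      nlinarith [Real.exp_pos (-(Real.sqrt (2*α)) * x)]
  -- ψ is continuous
  have hψcont : Continuous ψ := by
    have hrw : ψ = fun x => if x ≤ 0 then Real.exp (Real.sqrt (2*α)*x)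
        else (1+γ)*Real.exp (Real.sqrt (2*α)*x) - γ*Real.exp (-(Real.sqrt (2*α))*x) := by
      funext x
      rcases le_or_gt x 0 with h | h
      · rw [if_pos h, hψneg x h]
      · rw [if_neg (not_le.mpr h), hψpos x h.le]
    rw [hrw]
    apply Continuous.if_le (by fun_prop) (by fun_prop) continuous_id continuous_const
    intro x hx
    subst hx
    simp
  -- ψ is differentiable away from 0
  have hdiff : ∀ y : ℝ, y ≠ 0 → DifferentiableAt ℝ ψ y := by
    intro y hy
    rcases hy.lt_or_gt with h | h
    · have hev : ψ =ᶠ[nhds y] fun x => Real.exp (Real.sqrt (2*α) * x) :=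
        Filter.eventuallyEq_of_mem (Iio_mem_nhds h) fun x hx => hψneg x (le_of_lt hx)
      exact hev.differentiableAt_iff.mpr (by fun_prop)
    · have hev : ψ =ᶠ[nhds y] fun x => (1+γ)*Real.exp (Real.sqrt (2*α) * x)
          - γ*Real.exp (-(Real.sqrt (2*α)) * x) :=
        Filter.eventuallyEq_of_mem (Ioi_mem_nhds h) fun x hx => hψpos x (le_of_lt hx)
      exact hev.differentiableAt_iff.mpr (by fun_prop)
  -- q has positive derivative on (-1, x*) \ {0}
  have hqpos : ∀ y ∈ Set.Ioo (-1:ℝ) xstar, y ≠ 0 → 0 < deriv q y := by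
    intro y hy hy0
    have hψd : HasDerivAt ψ (deriv ψ y) y := (hdiff y hy0).hasDerivAt
    have h1 : HasDerivAt (fun z : ℝ => 1 + z) 1 y := by
      simpa using (hasDerivAt_id y).const_add (1:ℝ)
    have hdivd : HasDerivAt (fun z => (1+z)/ψ z)
        ((1 * ψ y - (1+y)*deriv ψ y)/(ψ y)^2) y :=
      h1.div hψd (ne_of_gt (hψpos' y))
    have hev : q =ᶠ[nhds y] fun z => (1+z)/ψ z :=
      Filter.eventuallyEq_of_mem (Ioi_mem_nhds hy.1)
        (fun z hz => by rw [hq z hz, hg z hz])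
    have hqd : HasDerivAt q ((1 * ψ y - (1+y)*deriv ψ y)/(ψ y)^2) y :=
      hdivd.congr_of_eventuallyEq hev
    rw [hqd.deriv]
    have htn := htneg y hy hy0
    rw [ht y hy.1 hy0] at htn
    have hgy : g y = 1 + y := hg y hy.1
    have hnum : 0 < 1 * ψ y - (1+y) * deriv ψ y := by
      rw [← hgy]; linarith
    exact div_pos hnum (pow_pos (hψpos' y) 2)
  -- q is continuous on any set ⊆ (-1, ∞)
  have hqcont : ∀ S : Set ℝ, S ⊆ Set.Ioi (-1:ℝ) → ContinuousOn q S := by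
    intro S hS
    have hc' : ContinuousOn (fun z => (1+z)/ψ z) S :=
      ContinuousOn.div (by fun_prop) hψcont.continuousOn
        (fun x _ => ne_of_gt (hψpos' x))
    exact hc'.congr (fun x hx => by rw [hq x (hS hx), hg x (hS hx)])
  -- main monotonicity lemma on closed intervals
  have hmono : ∀ u v : ℝ, -1 < u → v ≤ xstar → (∀ y ∈ Set.Ioo u v, y ≠ 0) →
      StrictMonoOn q (Set.Icc u v) := by
    intro u v hu hv hne
    apply strictMonoOn_of_deriv_pos (convex_Icc u v)
      (hqcont _ (fun x hx => lt_of_lt_of_le hu hx.1))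
    rw [interior_Icc]
    intro x hx
    exact hqpos x ⟨lt_trans hu hx.1, lt_of_lt_of_le hx.2 hv⟩ (hne x hx)
  -- key: q x < q xstar on (-1, xstar)
  have key : ∀ x ∈ Set.Ioo (-1:ℝ) xstar, q x < q xstar := by
    intro x hx
    rcases le_or_gt xstar 0 with hx0 | hx0
    · exact hmono x xstar hx.1 le_rfl
        (fun y hy => ne_of_lt (lt_of_lt_of_le hy.2 hx0))
        (left_mem_Icc.mpr hx.2.le) (right_mem_Icc.mpr hx.2.le) hx.2
    · have h0v : q 0 < q xstar :=
        hmono 0 xstar (by norm_num) le_rfl (fun y hy => ne_of_gt hy.1)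
          (left_mem_Icc.mpr hx0.le) (right_mem_Icc.mpr hx0.le) hx0
      rcases lt_trichotomy x 0 with h | h | h
      · have hx0' : q x < q 0 :=
          hmono x 0 hx.1 hx0.le (fun y hy => ne_of_lt hy.2)
            (left_mem_Icc.mpr h.le) (right_mem_Icc.mpr h.le) h
        exact hx0'.trans h0v
      · rw [h]; exact h0v
      · exact hmono x xstar hx.1 le_rfl (fun y hy => ne_of_gt (h.trans hy.1))
          (left_mem_Icc.mpr hx.2.le) (right_mem_Icc.mpr hx.2.le) hx.2
  refine ⟨?_, key, ?_⟩
  · intro a b hab h0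
    apply strictMonoOn_of_deriv_pos (convex_Ioo a b)
      (hqcont _ (fun x hx => (hab hx).1))
    rw [interior_Ioo]
    intro x hx
    exact hqpos x (hab hx) (fun h0' => h0 (h0' ▸ hx))
  · intro x hx
    have h2 := key x hx
    rw [hq x hx.1, hq xstar hxstar] at h2
    exact (div_lt_iff₀ (hψpos' x)).mp h2
end
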